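/- arXiv:2407.21785 — 2 statements merged into one kernel-verified Lean document; each statement's English description precedes it below -/
import Mathlib

section
/- For any local security condition f, any secure restaking graph G, and any coalition of services C ⊆ S such that f(C, G) = 1, there exists a secure C-local variant G' of G such that R_0(C, G') = 1 (where R_0(C, G') is defined over all valid cascades of attacks, not only stable ones). -/
/-- A restaking graph `G = (S, V, E, π, σ, α)` whose services and validators are
drawn from ambient universes `𝒮` and `𝒱` (so that different graphs over the
same universes can be compared, e.g. to form `C`-local variants). -/
structure RestakingGraph (𝒮 𝒱 : Type) where
  /-- services -/
  S : Set 𝒮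
  /-- validators -/
  V : Set 𝒱
  finS : S.Finite
  finV : V.Finite
  /-- edge relation: `E s v` means validator `v` restakes for service `s` -/
  E : 𝒮 → 𝒱 → Prop
  E_mem : ∀ s v, E s v → s ∈ S ∧ v ∈ V
  /-- profit from corruption -/
  pi : 𝒮 → ℝ
  /-- stake -/
  stake : 𝒱 → ℝ
  /-- attack thresholds -/
  alpha : 𝒮 → ℝ
  pi_nonneg : ∀ s ∈ S, 0 ≤ pi s
  stake_nonneg : ∀ v ∈ V, 0 ≤ stake v
  alpha_pos : ∀ s ∈ S, 0 < alpha s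
  alpha_le_one : ∀ s ∈ S, alpha s ≤ 1

namespace RestakingGraph

variable {𝒮 𝒱 : Type} (G : RestakingGraph 𝒮 𝒱)

/-- `π_A = Σ_{s ∈ A} π_s` -/
noncomputable def piSum (A : Set 𝒮) : ℝ := ∑ᶠ s ∈ A, G.pi s

/-- `σ_B = Σ_{v ∈ B} σ_v` -/
noncomputable def stakeSum (B : Set 𝒱) : ℝ := ∑ᶠ v ∈ B, G.stake v

/-- `N(s)`: validators adjacent to service `s` -/
def Ns (s : 𝒮) : Set 𝒱 := {v | G.E s v}

/-- `N(v)`: services adjacent to validator `v` -/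
def Nv (v : 𝒱) : Set 𝒮 := {s | G.E s v}

/-- `N(C)`: validators adjacent to some service of `C` -/
def NC (C : Set 𝒮) : Set 𝒱 := ⋃ s ∈ C, G.Ns s

/-- `Γ(C)`: validators (of `G`) exclusive to `C` -/
def Gamma (C : Set 𝒮) : Set 𝒱 := {v ∈ G.V | G.Nv v ⊆ C}

/-- `(A, B)` is an attacking coalition on `G ↘ D` (for `D = ∅`, on `G` itself). -/
def IsCoalition (D : Set 𝒱) (A : Set 𝒮) (B : Set 𝒱) : Prop :=
  A ⊆ G.S ∧ B ⊆ G.V ∧ Disjoint B D ∧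
    ∀ s ∈ A, G.alpha s * G.stakeSum (G.Ns s \ D) ≤ G.stakeSum (B ∩ G.Ns s)

/-- `(A, B)` is a valid attack on `G ↘ D`. -/
def IsValidAttack (D : Set 𝒱) (A : Set 𝒮) (B : Set 𝒱) : Prop :=
  G.IsCoalition D A B ∧ G.stakeSum B < G.piSum A

/-- `G` is secure: no valid attack exists. -/
def Secure : Prop := ∀ A B, ¬ G.IsValidAttack ∅ A B

/-- `B_1 ∪ ⋯ ∪ B_{t-1}`: the validators removed before step `t`. -/
def prevUnion {T : ℕ} (B : Fin T → Set 𝒱) (t : Fin T) : Set 𝒱 :=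
  ⋃ i : Fin T, ⋃ _ : i < t, B i

/-- `(A_1, B_1), …, (A_T, B_T)` is a valid cascade of attacks on `G ↘ D`. -/
def IsCascade (D : Set 𝒱) {T : ℕ} (A : Fin T → Set 𝒮) (B : Fin T → Set 𝒱) : Prop :=
  (∀ i j, i ≠ j → Disjoint (A i) (A j)) ∧
  (∀ i j, i ≠ j → Disjoint (B i) (B j)) ∧
  ∀ t, G.IsValidAttack (D ∪ prevUnion B t) (A t) (B t)

/-- `R_ψ(C, G)`: local worst-case stake loss for the coalition `C`, over all
valid cascades of attacks (not only stable ones). -/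
noncomputable def Rloc (C : Set 𝒮) (ψ : ℝ) : ℝ :=
  ψ + sSup { r : ℝ |
    ∃ (D : Set 𝒱) (T : ℕ) (A : Fin T → Set 𝒮) (B : Fin T → Set 𝒱),
      D ⊆ G.V ∧ G.stakeSum (D ∩ G.Gamma C) / G.stakeSum (G.Gamma C) ≤ ψ ∧
      G.IsCascade D A B ∧
      r = G.stakeSum ((⋃ t, B t) ∩ G.Gamma C) / G.stakeSum (G.Gamma C) }

/-- `(X, Y)` is an attack header on `G`. -/
def IsAttackHeader (X : Set 𝒮) (Y : Set 𝒱) : Prop :=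
  X ⊆ G.S ∧ Y ⊆ G.Gamma X ∧
    ∃ B : Set 𝒱, B ⊆ G.V ∧ B ∩ G.Gamma X = ∅ ∧ G.IsCoalition ∅ X (B ∪ Y)

/-- `G'` is a `C`-local variant of `G`: `C` cannot distinguish `G'` from `G`
on the basis of local information. -/
def IsLocalVariant (C : Set 𝒮) (G G' : RestakingGraph 𝒮 𝒱) : Prop :=
  C ⊆ G'.S ∧ G.NC C = G'.NC C ∧
    (∀ s ∈ C, G.pi s = G'.pi s ∧ G.alpha s = G'.alpha s) ∧
    (∀ v ∈ G.NC C, G.stake v = G'.stake v ∧ G.Nv v = G'.Nv v)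

/-- `f` is a local security condition: it cannot distinguish a graph from any
of its `C`-local variants. -/
def IsLocalCondition (f : Set 𝒮 → RestakingGraph 𝒮 𝒱 → Prop) : Prop :=
  ∀ (C : Set 𝒮) (G G' : RestakingGraph 𝒮 𝒱), C ⊆ G.S →
    IsLocalVariant C G G' → (f C G ↔ f C G')

end RestakingGraph

/-!
Extend `G` by a fresh service `t` with `α_t = 1` whose only validator, the guard `w`, carries
more stake than all profit in the graph, and by a fresh idle validator `u` of stake `1` restaking
for nothing (so `u` joins `Γ(C)` and makes `σ_{Γ(C)}` positive). Nothing adjacent to `C`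
changes, so this is a `C`-local variant. It stays secure: an attack containing `w` costs too
much, an attack on `t` must contain `w`, and any other attack restricts to an attack on `G`. But
the deletion `D = V' \ Γ'(C)` is admissible at `ψ = 0` and leaves `t` unguarded, and with
`π_t = σ_{Γ(C)} + 2 > σ_{Γ'(C)}` the single attack `({t}, Γ'(C))` destroys all of `Γ'(C)`.
-/

section Finsum

variable {α : Type*} {f : α → ℝ} {s t : Set α}

lemma finsum_mem_nonneg_of_nonneg (hf : ∀ a ∈ s, 0 ≤ f a) : 0 ≤ ∑ᶠ a ∈ s, f a :=
  finsum_mem_induction (0 ≤ ·) le_rfl (fun _ _ => add_nonneg) hf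

lemma finsum_mem_le_finsum_mem_of_subset (hst : s ⊆ t) (ht : t.Finite)
    (hf : ∀ a ∈ t, 0 ≤ f a) : ∑ᶠ a ∈ s, f a ≤ ∑ᶠ a ∈ t, f a := by
  rw [← finsum_mem_add_sdiff hst ht]
  exact le_add_of_nonneg_right (finsum_mem_nonneg_of_nonneg fun a ha => hf a ha.1)

end Finsum

namespace RestakingGraph

variable {𝒮 𝒱 : Type} (G : RestakingGraph 𝒮 𝒱) {A : Set 𝒮} {B B' D : Set 𝒱} {C : Set 𝒮}

@[simp]
lemma stakeSum_empty : G.stakeSum ∅ = 0 := finsum_mem_empty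

lemma stakeSum_nonneg (hB : B ⊆ G.V) : 0 ≤ G.stakeSum B :=
  finsum_mem_nonneg_of_nonneg fun v hv => G.stake_nonneg v (hB hv)

lemma stakeSum_mono (hBB' : B ⊆ B') (hB' : B' ⊆ G.V) : G.stakeSum B ≤ G.stakeSum B' :=
  finsum_mem_le_finsum_mem_of_subset hBB' (G.finV.subset hB') fun v hv => G.stake_nonneg v (hB' hv)

lemma piSum_le_piSum_S (hA : A ⊆ G.S) : G.piSum A ≤ G.piSum G.S :=
  finsum_mem_le_finsum_mem_of_subset hA G.finS G.pi_nonneg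

lemma piSum_S_nonneg : 0 ≤ G.piSum G.S :=
  finsum_mem_nonneg_of_nonneg G.pi_nonneg

lemma Gamma_subset_V : G.Gamma C ⊆ G.V := fun _ hv => hv.1

lemma isCoalition_of_Ns_subset (hA : A ⊆ G.S) (hB : B ⊆ G.V) (hBD : Disjoint B D)
    (hN : ∀ s ∈ A, G.Ns s ⊆ D) : G.IsCoalition D A B := by
  refine ⟨hA, hB, hBD, fun s hs => ?_⟩
  rw [Set.sdiff_eq_empty.2 (hN s hs), stakeSum_empty, mul_zero]
  exact G.stakeSum_nonneg (Set.inter_subset_left.trans hB)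

lemma isCascade_single (h : G.IsValidAttack D A B) :
    G.IsCascade D (fun _ : Fin 1 => A) (fun _ => B) := by
  have hprev : ∀ τ : Fin 1, prevUnion (fun _ => B) τ = ∅ := fun τ =>
    Set.eq_empty_iff_forall_notMem.2 fun v hv => by
      obtain ⟨i, hi⟩ := Set.mem_iUnion.1 hv
      obtain ⟨hiτ, -⟩ := Set.mem_iUnion.1 hi
      exact (Fin.lt_irrefl τ) (Subsingleton.elim i τ ▸ hiτ)
  refine ⟨fun i j hij => absurd (Subsingleton.elim i j) hij,
    fun i j hij => absurd (Subsingleton.elim i j) hij, fun τ => ?_⟩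
  rwa [hprev, Set.union_empty]

lemma stakeSum_inter_Gamma_div_le_one (X : Set 𝒱) :
    G.stakeSum (X ∩ G.Gamma C) / G.stakeSum (G.Gamma C) ≤ 1 := by
  rcases (G.stakeSum_nonneg G.Gamma_subset_V).eq_or_lt with h | h
  · rw [← h, div_zero]
    exact zero_le_one
  · exact div_le_one_of_le₀ (G.stakeSum_mono Set.inter_subset_right G.Gamma_subset_V) h.le

theorem Rloc_zero_eq_one_of_isValidAttack (hpos : 0 < G.stakeSum (G.Gamma C))
    (h : G.IsValidAttack (G.V \ G.Gamma C) A (G.Gamma C)) : G.Rloc C 0 = 1 := by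
  rw [Rloc, zero_add]
  refine IsGreatest.csSup_eq ⟨⟨G.V \ G.Gamma C, 1, fun _ => A, fun _ => G.Gamma C,
    Set.sdiff_subset, ?_, G.isCascade_single h, ?_⟩, ?_⟩
  · rw [Set.sdiff_inter_self, stakeSum_empty, zero_div]
  · rw [Set.iUnion_const, Set.inter_self, div_self hpos.ne']
  · rintro r ⟨-, -, -, B, -, -, -, rfl⟩
    exact G.stakeSum_inter_Gamma_div_le_one _

open Classical in
noncomputable def extend (t : 𝒮) (w u : 𝒱) (p M : ℝ) (hp : 0 ≤ p) (hM : 0 ≤ M) :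
    RestakingGraph 𝒮 𝒱 where
  S := insert t G.S
  V := insert w (insert u G.V)
  finS := G.finS.insert t
  finV := (G.finV.insert u).insert w
  E s v := G.E s v ∨ (s = t ∧ v = w)
  E_mem := by
    rintro s v (h | ⟨rfl, rfl⟩)
    · exact ⟨Or.inr (G.E_mem s v h).1, Or.inr (Or.inr (G.E_mem s v h).2)⟩
    · exact ⟨Or.inl rfl, Or.inl rfl⟩
  pi := Function.update G.pi t p
  stake := Function.update (Function.update G.stake u 1) w M
  alpha := Function.update G.alpha t 1
  pi_nonneg s hs := by
    simp only [Function.update_apply]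
    split_ifs with hst
    · exact hp
    · exact G.pi_nonneg s (hs.resolve_left hst)
  stake_nonneg v hv := by
    simp only [Function.update_apply]
    split_ifs with hvw hvu
    · exact hM
    · exact zero_le_one
    · exact G.stake_nonneg v ((hv.resolve_left hvw).resolve_left hvu)
  alpha_pos s hs := by
    simp only [Function.update_apply]
    split_ifs with hst
    · exact zero_lt_one
    · exact G.alpha_pos s (hs.resolve_left hst)
  alpha_le_one s hs := by
    simp only [Function.update_apply]
    split_ifs with hst
    · exact le_rfl
    · exact G.alpha_le_one s (hs.resolve_left hst)

section Extend

variable {G} {t s : 𝒮} {w u v : 𝒱} {p M : ℝ} {hp : 0 ≤ p} {hM : 0 ≤ M}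

lemma extend_pi_self : (G.extend t w u p M hp hM).pi t = p := by simp [extend]

lemma extend_pi_of_ne (h : s ≠ t) : (G.extend t w u p M hp hM).pi s = G.pi s := by
  simp [extend, h]

lemma extend_alpha_self : (G.extend t w u p M hp hM).alpha t = 1 := by simp [extend]

lemma extend_alpha_of_ne (h : s ≠ t) : (G.extend t w u p M hp hM).alpha s = G.alpha s := by
  simp [extend, h]

lemma extend_stake_guard : (G.extend t w u p M hp hM).stake w = M := by simp [extend]

lemma extend_stake_idle (huw : u ≠ w) : (G.extend t w u p M hp hM).stake u = 1 := by
  simp [extend, huw]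

lemma extend_stake_of_mem (hw : w ∉ G.V) (hu : u ∉ G.V) (hv : v ∈ G.V) :
    (G.extend t w u p M hp hM).stake v = G.stake v := by
  simp [extend, ne_of_mem_of_not_mem hv hw, ne_of_mem_of_not_mem hv hu]

lemma extend_stakeSum_of_subset (hw : w ∉ G.V) (hu : u ∉ G.V) (hB : B ⊆ G.V) :
    (G.extend t w u p M hp hM).stakeSum B = G.stakeSum B :=
  finsum_mem_congr rfl fun _ hv => extend_stake_of_mem hw hu (hB hv)

lemma extend_piSum_of_subset (ht : t ∉ G.S) (hA : A ⊆ G.S) :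
    (G.extend t w u p M hp hM).piSum A = G.piSum A :=
  finsum_mem_congr rfl fun _ hs => extend_pi_of_ne (ne_of_mem_of_not_mem (hA hs) ht)

lemma extend_piSum_S (ht : t ∉ G.S) :
    (G.extend t w u p M hp hM).piSum (G.extend t w u p M hp hM).S = p + G.piSum G.S := by
  show ∑ᶠ s ∈ insert t G.S, _ = _
  rw [finsum_mem_insert _ ht G.finS, extend_pi_self]
  exact congrArg (p + ·) (extend_piSum_of_subset ht subset_rfl)

lemma extend_Ns_self (ht : t ∉ G.S) : (G.extend t w u p M hp hM).Ns t = {w} := by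
  ext v
  simp only [Ns, extend, Set.mem_ofPred_eq, true_and, Set.mem_singleton_iff, or_iff_right_iff_imp]
  exact fun h => absurd (G.E_mem t v h).1 ht

lemma extend_Ns_of_ne (h : s ≠ t) : (G.extend t w u p M hp hM).Ns s = G.Ns s := by
  simp [Ns, extend, h]

lemma extend_Nv_of_ne (h : v ≠ w) : (G.extend t w u p M hp hM).Nv v = G.Nv v := by
  simp [Nv, extend, h]

lemma extend_Gamma (htC : t ∉ C) (hw : w ∉ G.V) (hu : u ∉ G.V) (huw : u ≠ w) :
    (G.extend t w u p M hp hM).Gamma C = insert u (G.Gamma C) := by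
  ext v
  rcases eq_or_ne v w with rfl | hvw
  · refine iff_of_false (fun hv => htC (hv.2 (Or.inr ⟨rfl, rfl⟩))) ?_
    rintro (h | h)
    exacts [huw h.symm, hw h.1]
  · have hNv : ∀ s, s ∉ G.Nv u := fun s h => hu (G.E_mem s u h).2
    have hV : v ∈ (G.extend t w u p M hp hM).V ↔ v = u ∨ v ∈ G.V := by simp [extend, hvw]
    simp only [Gamma, Set.mem_ofPred_eq, extend_Nv_of_ne hvw, hV, Set.mem_insert_iff]
    rcases eq_or_ne v u with rfl | hvu
    · simp [Set.subset_def, hNv]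
    · simp [hvu]

lemma isLocalVariant_extend (hC : C ⊆ G.S) (ht : t ∉ G.S) (hw : w ∉ G.V) (hu : u ∉ G.V) :
    IsLocalVariant C G (G.extend t w u p M hp hM) := by
  have hne : ∀ s ∈ C, s ≠ t := fun s hs => ne_of_mem_of_not_mem (hC hs) ht
  refine ⟨fun s hs => Or.inr (hC hs), ?_, fun s hs => ?_, fun v hv => ?_⟩
  · exact Set.iUnion₂_congr fun s hs => (extend_Ns_of_ne (hne s hs)).symm
  · exact ⟨(extend_pi_of_ne (hne s hs)).symm, (extend_alpha_of_ne (hne s hs)).symm⟩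
  · obtain ⟨s, -, hsv⟩ := Set.mem_iUnion₂.1 hv
    have hvV := (G.E_mem s v hsv).2
    exact ⟨(extend_stake_of_mem hw hu hvV).symm,
      (extend_Nv_of_ne (ne_of_mem_of_not_mem hvV hw)).symm⟩

lemma isValidAttack_of_extend (ht : t ∉ G.S) (hw : w ∉ G.V) (hu : u ∉ G.V) (htA : t ∉ A)
    (h : (G.extend t w u p M hp hM).IsValidAttack ∅ A B) : G.IsValidAttack ∅ A (B ∩ G.V) := by
  obtain ⟨⟨hAS, hBV, -, hcoal⟩, hlt⟩ := h
  have hA : A ⊆ G.S := fun s hs => (hAS hs).resolve_left (ne_of_mem_of_not_mem hs htA)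
  refine ⟨⟨hA, Set.inter_subset_right, Set.disjoint_empty _, fun s hs => ?_⟩, ?_⟩
  · have hN : G.Ns s ⊆ G.V := fun v hv => (G.E_mem s v hv).2
    have hc := hcoal s hs
    rw [Set.sdiff_empty]
    rwa [extend_alpha_of_ne (ne_of_mem_of_not_mem hs htA), extend_Ns_of_ne
      (ne_of_mem_of_not_mem hs htA), Set.sdiff_empty, extend_stakeSum_of_subset hw hu hN,
      ← Set.inter_eq_right.2 hN, ← Set.inter_assoc, Set.inter_eq_right.2 hN,
      extend_stakeSum_of_subset hw hu (Set.inter_subset_right.trans hN)] at hc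
  · calc G.stakeSum (B ∩ G.V)
        = (G.extend t w u p M hp hM).stakeSum (B ∩ G.V) :=
          (extend_stakeSum_of_subset hw hu Set.inter_subset_right).symm
      _ ≤ (G.extend t w u p M hp hM).stakeSum B := stakeSum_mono _ Set.inter_subset_left hBV
      _ < G.piSum A := by rwa [← extend_piSum_of_subset ht hA]

lemma mem_of_isCoalition_extend (ht : t ∉ G.S) (hMpos : 0 < M) (htA : t ∈ A)
    (h : (G.extend t w u p M hp hM).IsCoalition ∅ A B) : w ∈ B := by
  by_contra hwB
  have hc := h.2.2.2 t htA
  rw [extend_alpha_self, extend_Ns_self ht, Set.sdiff_empty, Set.inter_singleton_eq_empty.2 hwB,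
    stakeSum_empty, one_mul, stakeSum, finsum_mem_singleton, extend_stake_guard] at hc
  linarith

lemma not_isValidAttack_extend_of_mem (ht : t ∉ G.S) (hMp : p + G.piSum G.S ≤ M) (hwB : w ∈ B) :
    ¬ (G.extend t w u p M hp hM).IsValidAttack ∅ A B := by
  rintro ⟨⟨hAS, hBV, -⟩, hlt⟩
  have hw : M ≤ (G.extend t w u p M hp hM).stakeSum B := by
    calc M = (G.extend t w u p M hp hM).stakeSum {w} := by
          rw [stakeSum, finsum_mem_singleton, extend_stake_guard]
      _ ≤ _ := stakeSum_mono _ (Set.singleton_subset_iff.2 hwB) hBV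
  have hA := piSum_le_piSum_S _ hAS
  rw [extend_piSum_S ht] at hA
  linarith

theorem secure_extend (hsec : G.Secure) (ht : t ∉ G.S) (hw : w ∉ G.V) (hu : u ∉ G.V)
    (hMp : p + G.piSum G.S < M) : (G.extend t w u p M hp hM).Secure := by
  intro A B hAB
  have hMpos : 0 < M := by linarith [G.piSum_S_nonneg]
  by_cases htA : t ∈ A
  · exact not_isValidAttack_extend_of_mem ht hMp.le
      (mem_of_isCoalition_extend ht hMpos htA hAB.1) hAB
  · exact hsec A (B ∩ G.V) (isValidAttack_of_extend ht hw hu htA hAB)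

theorem Rloc_extend (htC : t ∉ C) (ht : t ∉ G.S) (hw : w ∉ G.V) (hu : u ∉ G.V) (huw : u ≠ w)
    (hprofit : G.stakeSum (G.Gamma C) + 1 < p) : (G.extend t w u p M hp hM).Rloc C 0 = 1 := by
  have hΓ := extend_Gamma (hp := hp) (hM := hM) htC hw hu huw
  have hσΓ : (G.extend t w u p M hp hM).stakeSum ((G.extend t w u p M hp hM).Gamma C)
      = 1 + G.stakeSum (G.Gamma C) := by
    rw [hΓ, stakeSum, finsum_mem_insert _ (fun h => hu h.1) (G.finV.subset G.Gamma_subset_V),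
      extend_stake_idle huw, ← stakeSum, extend_stakeSum_of_subset hw hu G.Gamma_subset_V]
  have hwΓ : w ∉ (G.extend t w u p M hp hM).Gamma C := by
    rw [hΓ]
    rintro (h | h)
    exacts [huw h.symm, hw h.1]
  have hσΓ_nonneg := G.stakeSum_nonneg (G.Gamma_subset_V (C := C))
  refine Rloc_zero_eq_one_of_isValidAttack _ (A := {t}) (by linarith) ⟨isCoalition_of_Ns_subset _
    (by simp [extend]) (Gamma_subset_V _) Set.disjoint_sdiff_right ?_, ?_⟩
  · rintro s rfl
    rw [extend_Ns_self ht, Set.singleton_subset_iff]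
    exact ⟨Or.inl rfl, hwΓ⟩
  · rw [hσΓ, piSum, finsum_mem_singleton, extend_pi_self]
    linarith

end Extend

end RestakingGraph

theorem local_condition_impossible_general {𝒮 𝒱 : Type} [Infinite 𝒮] [Infinite 𝒱]
    (G : RestakingGraph 𝒮 𝒱) (hsec : G.Secure)
    (C : Set 𝒮) (hC : C ⊆ G.S) :
    ∃ G' : RestakingGraph 𝒮 𝒱,
      RestakingGraph.IsLocalVariant C G G' ∧ G'.Secure ∧ G'.Rloc C 0 = 1 := by
  obtain ⟨t, ht⟩ := G.finS.infinite_compl.nonempty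
  obtain ⟨w, hw⟩ := G.finV.infinite_compl.nonempty
  obtain ⟨u, hu⟩ := (G.finV.insert w).infinite_compl.nonempty
  rw [Set.mem_compl_iff, Set.mem_insert_iff, not_or] at hu
  obtain ⟨huw, hu⟩ := hu
  have hσΓ := G.stakeSum_nonneg (G.Gamma_subset_V (C := C))
  have hπ := G.piSum_S_nonneg
  let p := G.stakeSum (G.Gamma C) + 2
  let M := p + G.piSum G.S + 1
  have hp : 0 ≤ p := by linarith
  have hM : 0 ≤ M := by linarith
  exact ⟨G.extend t w u p M hp hM, G.isLocalVariant_extend hC ht hw hu,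
    G.secure_extend hsec ht hw hu (by linarith),
    G.Rloc_extend (fun h => ht (hC h)) ht hw hu huw (by linarith)⟩

/-- Theorem: impossibility of local security conditions.
For any local security condition `f`, any secure restaking graph `G`, and any
coalition of services `C ⊆ S` with `f(C, G) = 1`, there is a secure `C`-local
variant `G'` of `G` such that `R_0(C, G') = 1` (over all valid cascades). The
ambient universes are assumed infinite, so that fresh services and validators
are always available. -/
theorem local_condition_impossible {𝒮 𝒱 : Type} [Infinite 𝒮] [Infinite 𝒱]
    (f : Set 𝒮 → RestakingGraph 𝒮 𝒱 → Prop)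
    (hf : RestakingGraph.IsLocalCondition f)
    (G : RestakingGraph 𝒮 𝒱) (hsec : G.Secure)
    (C : Set 𝒮) (hC : C ⊆ G.S) (hfCG : f C G) :
    ∃ G' : RestakingGraph 𝒮 𝒱,
      RestakingGraph.IsLocalVariant C G G' ∧ G'.Secure ∧ G'.Rloc C 0 = 1 :=
  local_condition_impossible_general G hsec C hC
end

section
/- Fix γ > 0. The Boolean function f that maps a restaking graph G and coalition C ⊆ S to 1 if and only if every attack header (X, Y) on G with X ⊆ C satisfies (1+γ)·π_X ≤ σ_Y is a local security condition; that is, f(C, G) = f(C, G') for every C-local variant G' of G. -/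
/-!
An attack header `(X, Y)` on a `C`-local variant `G'` with `X ⊆ C` only involves the services
of `C` and the validators around them; restricting `Y` and the outside attackers to `N(C)` gives
an attack header `(X, Y ∩ N(C))` on `G` with the same profit and stake numbers. Since stakes are
nonnegative, `σ_{Y ∩ N(C)} ≤ σ_Y`, so the overcollateralization bound transfers from `G` to `G'`,
and by symmetry of the local-variant relation also back.
-/

open Set

namespace RestakingGraph

variable {𝒮 𝒱 : Type}

def HeadersOvercollateralized (γ : ℝ) (C : Set 𝒮) (G : RestakingGraph 𝒮 𝒱) : Prop :=
  ∀ X Y, G.IsAttackHeader X Y → X ⊆ C → (1 + γ) * G.piSum X ≤ G.stakeSum Y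

lemma mem_NC {G : RestakingGraph 𝒮 𝒱} {C : Set 𝒮} {s : 𝒮} {v : 𝒱}
    (hs : s ∈ C) (hv : v ∈ G.Ns s) : v ∈ G.NC C :=
  mem_biUnion hs hv

lemma NC_subset_V (G : RestakingGraph 𝒮 𝒱) (C : Set 𝒮) : G.NC C ⊆ G.V := by
  simp only [NC, iUnion_subset_iff]
  exact fun s _ v hv => (G.E_mem s v hv).2

lemma stakeSum_mono_s15 (G : RestakingGraph 𝒮 𝒱) {T U : Set 𝒱} (hTU : T ⊆ U) (hU : U ⊆ G.V) :
    G.stakeSum T ≤ G.stakeSum U := by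
  have hUfin := G.finV.subset hU
  rw [stakeSum, stakeSum, finsum_mem_eq_finite_toFinset_sum _ (hUfin.subset hTU),
    finsum_mem_eq_finite_toFinset_sum _ hUfin]
  exact Finset.sum_le_sum_of_subset_of_nonneg (by simpa using hTU)
    fun v hv _ => G.stake_nonneg v (hU (by simpa using hv))

namespace IsLocalVariant

variable {C : Set 𝒮} {G G' : RestakingGraph 𝒮 𝒱}

lemma symm (hCS : C ⊆ G.S) (h : IsLocalVariant C G G') : IsLocalVariant C G' G := by
  obtain ⟨-, hNC, hpa, hsv⟩ := h
  refine ⟨hCS, hNC.symm, fun s hs => ⟨(hpa s hs).1.symm, (hpa s hs).2.symm⟩, fun v hv => ?_⟩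
  obtain ⟨hσ, hN⟩ := hsv v (hNC ▸ hv)
  exact ⟨hσ.symm, hN.symm⟩

lemma Ns_eq (h : IsLocalVariant C G G') {s : 𝒮} (hs : s ∈ C) : G.Ns s = G'.Ns s := by
  ext v
  constructor
  · intro hv
    exact show s ∈ G'.Nv v from (h.2.2.2 v (mem_NC hs hv)).2 ▸ hv
  · intro hv
    exact show s ∈ G.Nv v from (h.2.2.2 v (h.2.1 ▸ mem_NC hs hv)).2 ▸ hv

lemma stakeSum_eq (h : IsLocalVariant C G G') {T : Set 𝒱} (hT : T ⊆ G.NC C) :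
    G.stakeSum T = G'.stakeSum T :=
  finsum_mem_congr rfl fun v hv => (h.2.2.2 v (hT hv)).1

lemma piSum_eq (h : IsLocalVariant C G G') {X : Set 𝒮} (hX : X ⊆ C) :
    G.piSum X = G'.piSum X :=
  finsum_mem_congr rfl fun s hs => (h.2.2.1 s (hX hs)).1

lemma mem_Gamma_iff (h : IsLocalVariant C G G') {X : Set 𝒮} {v : 𝒱} (hv : v ∈ G.NC C) :
    v ∈ G.Gamma X ↔ v ∈ G'.Gamma X := by
  have hv' : v ∈ G'.V := G'.NC_subset_V C (h.2.1 ▸ hv)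
  simp only [Gamma, mem_ofPred_eq, G.NC_subset_V C hv, hv', (h.2.2.2 v hv).2, true_and]

lemma isCoalition_inter_NC (hCS : C ⊆ G.S) (h : IsLocalVariant C G G') {X : Set 𝒮}
    (hX : X ⊆ C) {B : Set 𝒱} (hB : G'.IsCoalition ∅ X B) :
    G.IsCoalition ∅ X (B ∩ G.NC C) := by
  refine ⟨hX.trans hCS, inter_subset_right.trans (G.NC_subset_V C), disjoint_empty _,
    fun s hs => ?_⟩
  have hNs : G.Ns s ⊆ G.NC C := fun v => mem_NC (hX hs)
  rw [sdiff_empty, inter_assoc, inter_eq_right.mpr hNs, (h.2.2.1 s (hX hs)).2,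
    h.stakeSum_eq hNs, h.stakeSum_eq (inter_subset_right.trans hNs), h.Ns_eq (hX hs)]
  simpa only [sdiff_empty] using hB.2.2.2 s hs

lemma isAttackHeader_inter_NC (hCS : C ⊆ G.S) (h : IsLocalVariant C G G') {X : Set 𝒮}
    (hX : X ⊆ C) {Y : Set 𝒱} (hXY : G'.IsAttackHeader X Y) :
    G.IsAttackHeader X (Y ∩ G.NC C) := by
  obtain ⟨-, hY, B, -, hBΓ, hB⟩ := hXY
  refine ⟨hX.trans hCS, fun v hv => (h.mem_Gamma_iff hv.2).2 (hY hv.1), B ∩ G.NC C,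
    inter_subset_right.trans (G.NC_subset_V C), ?_, ?_⟩
  · refine eq_empty_of_forall_notMem fun v ⟨⟨hvB, hvNC⟩, hvΓ⟩ => ?_
    exact (hBΓ ▸ mem_inter hvB ((h.mem_Gamma_iff hvNC).1 hvΓ) : v ∈ (∅ : Set 𝒱))
  · rw [← union_inter_distrib_right]
    exact h.isCoalition_inter_NC hCS hX hB

lemma headersOvercollateralized (hCS : C ⊆ G.S) (h : IsLocalVariant C G G') {γ : ℝ}
    (hG : HeadersOvercollateralized γ C G) : HeadersOvercollateralized γ C G' := by
  intro X Y hXY hX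
  calc (1 + γ) * G'.piSum X
      = (1 + γ) * G.piSum X := by rw [h.piSum_eq hX]
    _ ≤ G.stakeSum (Y ∩ G.NC C) := hG X _ (h.isAttackHeader_inter_NC hCS hX hXY) hX
    _ = G'.stakeSum (Y ∩ G.NC C) := h.stakeSum_eq inter_subset_right
    _ ≤ G'.stakeSum Y := G'.stakeSum_mono_s15 inter_subset_left fun v hv => (hXY.2.1 hv).1

end IsLocalVariant

end RestakingGraph

theorem header_condition_is_local_general {𝒮 𝒱 : Type} (γ : ℝ) :
    RestakingGraph.IsLocalCondition (fun (C : Set 𝒮) (G : RestakingGraph 𝒮 𝒱) =>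
      ∀ X Y, G.IsAttackHeader X Y → X ⊆ C →
        (1 + γ) * G.piSum X ≤ G.stakeSum Y) :=
  fun _ _ _ hCS (h : RestakingGraph.IsLocalVariant _ _ _) =>
    ⟨h.headersOvercollateralized hCS, (h.symm hCS).headersOvercollateralized h.1⟩

/-- Overcollateralization of attack headers is a local
security condition. For fixed `γ > 0`, the condition mapping `(C, G)` to
"every attack header `(X, Y)` on `G` with `X ⊆ C` satisfies
`(1+γ)·π_X ≤ σ_Y`" is a local security condition. -/
theorem header_condition_is_local {𝒮 𝒱 : Type} (γ : ℝ) (hγ : 0 < γ) :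
    RestakingGraph.IsLocalCondition (fun (C : Set 𝒮) (G : RestakingGraph 𝒮 𝒱) =>
      ∀ X Y, G.IsAttackHeader X Y → X ⊆ C →
        (1 + γ) * G.piSum X ≤ G.stakeSum Y) :=
  header_condition_is_local_general γ
end
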